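/- arXiv:2412.18931 — 4 statements merged into one kernel-verified Lean document; each statement's English description precedes it below -/
import Mathlib

section
/- Let R₀ > 0 and 0 ≤ φₛ < 1. The set S = {v ∈ ℝ² : ‖v‖² ≤ R₀(‖v‖ + φₛ·v₁)} (whose boundary is the limaçon fire front r = R₀(1 + φₛ cos θ) in polar coordinates) is convex if and only if φₛ ≤ 1/2. -/
/-!
With `f r = r² - R₀ r`, the set is `{v | f ‖v‖ ≤ R₀ φ v₁}`.
If `φ ≤ 1/2` it is convex: the disc `‖v‖ ≤ R₀ (1 - φ)` lies in it, and beyond that disc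
`‖v‖ ≥ R₀/2`, where `f` is increasing, so for a convex combination `m` of `p` and `q` the
triangle inequality and the convexity of `f` give `f ‖m‖ ≤ a f ‖p‖ + b f ‖q‖ ≤ R₀ φ m₁`.
If `φ > 1/2`, two mirror-image points of norm `R₀/2` on the boundary, with first coordinate
`-R₀/(4φ)`, have a midpoint outside the set, since `4φ(1 - φ) < 1`.
-/

open RealInnerProductSpace

variable {E : Type*}

section Normed

variable [NormedAddCommGroup E] [NormedSpace ℝ E]

def slopeSublevel (R₀ φ : ℝ) (ℓ : StrongDual ℝ E) : Set E :=
  {v | ‖v‖ ^ 2 ≤ R₀ * (‖v‖ + φ * ℓ v)}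

variable {R₀ φ : ℝ} {ℓ : StrongDual ℝ E}

@[simp]
lemma mem_slopeSublevel {v : E} : v ∈ slopeSublevel R₀ φ ℓ ↔ ‖v‖ ^ 2 ≤ R₀ * (‖v‖ + φ * ℓ v) :=
  Iff.rfl

lemma neg_norm_le_apply_of_opNorm_le_one (hℓ : ‖ℓ‖ ≤ 1) (v : E) : -‖v‖ ≤ ℓ v := by
  have h : |ℓ v| ≤ ‖v‖ := calc
    |ℓ v| ≤ ‖ℓ‖ * ‖v‖ := ℓ.le_opNorm v
    _ ≤ ‖v‖ := mul_le_of_le_one_left (norm_nonneg v) hℓ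
  exact neg_le_of_abs_le h

lemma mem_slopeSublevel_of_norm_le (hR₀ : 0 ≤ R₀) (hφ₀ : 0 ≤ φ) (hℓ : ‖ℓ‖ ≤ 1) {v : E}
    (hv : ‖v‖ ≤ R₀ * (1 - φ)) : v ∈ slopeSublevel R₀ φ ℓ := by
  have hℓv := neg_norm_le_apply_of_opNorm_le_one hℓ v
  have : R₀ * φ * -‖v‖ ≤ R₀ * φ * ℓ v := by gcongr
  rw [mem_slopeSublevel]
  nlinarith [mul_le_mul_of_nonneg_left hv (norm_nonneg v)]

theorem convex_slopeSublevel (hR₀ : 0 ≤ R₀) (hφ₀ : 0 ≤ φ) (hφ : φ ≤ 1 / 2) (hℓ : ‖ℓ‖ ≤ 1) :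
    Convex ℝ (slopeSublevel R₀ φ ℓ) := by
  intro p hp q hq a b ha hb hab
  rcases le_or_gt ‖a • p + b • q‖ (R₀ * (1 - φ)) with hsmall | hlarge
  · exact mem_slopeSublevel_of_norm_le hR₀ hφ₀ hℓ hsmall
  set C := ‖a • p + b • q‖
  set s := a * ‖p‖ + b * ‖q‖
  have hCs : C ≤ s := by
    simpa [C, s, norm_smul, abs_of_nonneg ha, abs_of_nonneg hb] using norm_add_le (a • p) (b • q)
  have hhalf : R₀ / 2 ≤ R₀ * (1 - φ) := by nlinarith
  have hmono : C ^ 2 - R₀ * C ≤ s ^ 2 - R₀ * s := by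
    nlinarith [mul_nonneg (sub_nonneg.2 hCs) (by linarith : 0 ≤ s + C - R₀)]
  have hconvex : s ^ 2 - R₀ * s ≤ a * (‖p‖ ^ 2 - R₀ * ‖p‖) + b * (‖q‖ ^ 2 - R₀ * ‖q‖) := by
    have : b = 1 - a := by linarith
    subst this
    nlinarith [mul_nonneg (mul_nonneg ha hb) (sq_nonneg (‖p‖ - ‖q‖))]
  have hℓm : ℓ (a • p + b • q) = a * ℓ p + b * ℓ q := by simp
  rw [mem_slopeSublevel] at hp hq
  rw [mem_slopeSublevel, hℓm]
  nlinarith [mul_le_mul_of_nonneg_left hp ha, mul_le_mul_of_nonneg_left hq hb]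

end Normed

section InnerProduct

variable [NormedAddCommGroup E] [InnerProductSpace ℝ E] {R₀ φ : ℝ} {ℓ : StrongDual ℝ E}

lemma norm_smul_add_smul_sq {u w : E} (hu : ‖u‖ = 1) (hw : ‖w‖ = 1) (huw : ⟪u, w⟫ = 0)
    (c d : ℝ) : ‖c • u + d • w‖ ^ 2 = c ^ 2 + d ^ 2 := by
  have h : ⟪c • u, d • w⟫ = 0 := by simp [real_inner_smul_left, real_inner_smul_right, huw]
  rw [sq, norm_add_sq_eq_norm_sq_add_norm_sq_real h, norm_smul, norm_smul, hu, hw]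
  simp [sq]

theorem not_convex_slopeSublevel (hR₀ : 0 < R₀) (hφ : 1 / 2 < φ) {u w : E} (hu : ‖u‖ = 1)
    (hw : ‖w‖ = 1) (huw : ⟪u, w⟫ = 0) (hℓu : ℓ u = 1) (hℓw : ℓ w = 0) :
    ¬Convex ℝ (slopeSublevel R₀ φ ℓ) := by
  intro hconv
  obtain ⟨c, hc⟩ : ∃ c, c = R₀ / (4 * φ) := ⟨_, rfl⟩
  have hc0 : 0 < c := by rw [hc]; positivity
  have hcφ : φ * c = R₀ / 4 := by rw [hc]; field_simp
  have hcR : c < R₀ / 2 := by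
    rw [hc, div_lt_div_iff₀ (by positivity) two_pos]; nlinarith
  obtain ⟨d, hd⟩ : ∃ d, d ^ 2 = (R₀ / 2) ^ 2 - c ^ 2 := ⟨√_, Real.sq_sqrt (by nlinarith)⟩
  have hboundary (d' : ℝ) (hd' : d' ^ 2 = d ^ 2) : (-c) • u + d' • w ∈ slopeSublevel R₀ φ ℓ := by
    have hnorm : ‖(-c) • u + d' • w‖ = R₀ / 2 := by
      rw [← sq_eq_sq₀ (norm_nonneg _) (by positivity), norm_smul_add_smul_sq hu hw huw]
      linarith
    simp only [mem_slopeSublevel, hnorm, map_add, map_smul, hℓu, hℓw, smul_eq_mul]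
    nlinarith
  have hmid := hconv (hboundary d rfl) (hboundary (-d) (neg_sq d)) (by norm_num : (0 : ℝ) ≤ 1 / 2)
    (by norm_num : (0 : ℝ) ≤ 1 / 2) (by norm_num)
  rw [show (1 / 2 : ℝ) • ((-c) • u + d • w) + (1 / 2 : ℝ) • ((-c) • u + (-d) • w) = (-c) • u by
    module, mem_slopeSublevel, norm_smul, hu, map_smul, hℓu, smul_eq_mul, norm_neg,
    Real.norm_of_nonneg hc0.le, mul_one, mul_one] at hmid
  have hcle : c ≤ R₀ * (1 - φ) := by nlinarith
  have hφcle : R₀ / 4 ≤ R₀ * φ * (1 - φ) := by nlinarith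
  nlinarith [mul_pos hR₀ (pow_pos (by linarith : 0 < 2 * φ - 1) 2)]

end InnerProduct

lemma EuclideanSpace.norm_proj_le {𝕜 ι : Type*} [RCLike 𝕜] [Fintype ι] (i : ι) :
    ‖EuclideanSpace.proj (𝕜 := 𝕜) i‖ ≤ 1 :=
  ContinuousLinearMap.opNorm_le_bound _ zero_le_one fun v => by
    simpa using PiLp.norm_apply_le v i

theorem fireFront_sublevel_convex_iff_general (R₀ φₛ : ℝ) (hR₀ : 0 < R₀)
    (hφ₀ : 0 ≤ φₛ) :
    Convex ℝ {v : EuclideanSpace ℝ (Fin 2) | ‖v‖ ^ 2 ≤ R₀ * (‖v‖ + φₛ * v 0)} ↔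
      φₛ ≤ 1 / 2 := by
  change Convex ℝ (slopeSublevel R₀ φₛ (EuclideanSpace.proj (0 : Fin 2))) ↔ _
  refine ⟨fun hconv => ?_, fun hφ => convex_slopeSublevel hR₀.le hφ₀ hφ
    (EuclideanSpace.norm_proj_le 0)⟩
  by_contra! hφ
  refine not_convex_slopeSublevel hR₀ hφ (u := EuclideanSpace.single 0 1)
    (w := EuclideanSpace.single 1 1) ?_ ?_ ?_ ?_ ?_ hconv <;>
    simp [EuclideanSpace.inner_single_left]

/-- For `R₀ > 0` and `0 ≤ φₛ < 1`, the sublevel set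
`S = {v ∈ ℝ² : ‖v‖² ≤ R₀ (‖v‖ + φₛ v₁)}` of the Matsumoto-type slope metric
(whose boundary is the limaçon fire front `r = R₀(1 + φₛ cos θ)`) is convex
if and only if `φₛ ≤ 1/2`. -/
theorem fireFront_sublevel_convex_iff (R₀ φₛ : ℝ) (hR₀ : 0 < R₀)
    (hφ₀ : 0 ≤ φₛ) (hφ₁ : φₛ < 1) :
    Convex ℝ {v : EuclideanSpace ℝ (Fin 2) | ‖v‖ ^ 2 ≤ R₀ * (‖v‖ + φₛ * v 0)} ↔
      φₛ ≤ 1 / 2 :=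
  fireFront_sublevel_convex_iff_general R₀ φₛ hR₀ hφ₀
end

section
/- Let R₀ > 0 and 0 ≤ φₛ < 1. Define F : ℝ² → ℝ by F(v) = ‖v‖²/(R₀(‖v‖ + φₛ·v₁)) for v ≠ 0 and F(0) = 0. Then F is a convex function on ℝ² if and only if φₛ ≤ 1/2. -/
set_option maxHeartbeats 1000000 in
theorem slope_key (φ r ρ x y s t : ℝ) (h0 : 0 ≤ φ) (h1 : φ ≤ 1/2)
    (hr : 0 < r) (hρ : 0 < ρ) (hx : x^2 + y^2 = r^2) (hs : s^2 + t^2 = ρ^2) :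
    ((x*r + φ*(2*x^2 - r^2))*s + y*(r + 2*φ*x)*t)*(ρ + φ*s) ≤ ρ^2*(r + φ*x)^2 := by
  have hrρ : 0 < r*ρ := mul_pos hr hρ
  have hCS : (x*s+y*t)^2 + (y*s-x*t)^2 = r^2*ρ^2 := by
    linear_combination (s^2+t^2)*hx + r^2*hs
  have hC1 : x*s+y*t ≤ r*ρ := by
    nlinarith [sq_nonneg (y*s-x*t), sq_nonneg (x*s+y*t - r*ρ)]
  have hCm : -(r*ρ) ≤ x*s+y*t := by
    nlinarith [sq_nonneg (y*s-x*t), sq_nonneg (x*s+y*t + r*ρ)]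
  have hA0 : (x*(2*r*ρ+(x*s+y*t))+y*(y*s-x*t))^2
      + (x*(y*s-x*t) - y*(2*r*ρ+(x*s+y*t)))^2
      = 5*r^4*ρ^2 + 4*r^3*ρ*(x*s+y*t) := by
    linear_combination ((2*r*ρ+(x*s+y*t))^2+(y*s-x*t)^2)*hx + r^2*hCS
  have hA : (x*(2*r*ρ+(x*s+y*t))+y*(y*s-x*t))^2 ≤ 5*r^4*ρ^2 + 4*r^3*ρ*(x*s+y*t) := by
    nlinarith [sq_nonneg (x*(y*s-x*t) - y*(2*r*ρ+(x*s+y*t)))]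
  have hfac1 : 0 ≤ (1-φ)*(r*ρ) - φ^2*(r*ρ+(x*s+y*t)) := by
    nlinarith [mul_nonneg (mul_nonneg (by linarith : (0:ℝ) ≤ 1-2*φ) (by linarith : (0:ℝ) ≤ 1+φ)) hrρ.le,
      mul_nonneg (sq_nonneg φ) (sub_nonneg.2 hC1)]
  have hfac2 : 0 ≤ (1+φ)*(r*ρ) - φ^2*(r*ρ+(x*s+y*t)) := by
    nlinarith [mul_nonneg (mul_nonneg (by linarith : (0:ℝ) ≤ 1-φ) (by linarith : (0:ℝ) ≤ 1+2*φ)) hrρ.le,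
      mul_nonneg (sq_nonneg φ) (sub_nonneg.2 hC1)]
  have hBpos : 0 ≤ r^2*ρ + φ^2*(r*(r*ρ+(x*s+y*t))) := by
    have h2 : 0 ≤ r*ρ + (x*s+y*t) := by linarith
    nlinarith [mul_nonneg (mul_nonneg (sq_nonneg φ) hr.le) h2, mul_pos (mul_pos hr hr) hρ]
  have hid : (r^2*ρ + φ^2*(r*(r*ρ+(x*s+y*t))))^2 - φ^2*(5*r^4*ρ^2 + 4*r^3*ρ*(x*s+y*t))
      = r^2*(((1-φ)*(r*ρ) - φ^2*(r*ρ+(x*s+y*t)))*((1+φ)*(r*ρ) - φ^2*(r*ρ+(x*s+y*t)))) := by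
    ring
  have hq : φ^2*(x*(2*r*ρ+(x*s+y*t))+y*(y*s-x*t))^2
      ≤ (r^2*ρ + φ^2*(r*(r*ρ+(x*s+y*t))))^2 := by
    linarith [mul_le_mul_of_nonneg_left hA (sq_nonneg φ),
      mul_nonneg (sq_nonneg r) (mul_nonneg hfac1 hfac2), hid]
  have hB : 0 ≤ r^2*ρ + φ*(x*(2*r*ρ+(x*s+y*t))+y*(y*s-x*t)) + φ^2*(r*(r*ρ+(x*s+y*t))) := by
    nlinarith [hq, hBpos,
      sq_nonneg (φ*(x*(2*r*ρ+(x*s+y*t))+y*(y*s-x*t)) + (r^2*ρ + φ^2*(r*(r*ρ+(x*s+y*t)))))]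
  have hmain : r*(ρ^2*(r + φ*x)^2 - ((x*r + φ*(2*x^2 - r^2))*s + y*(r + 2*φ*x)*t)*(ρ + φ*s))
      = (r*ρ - (x*s+y*t)) * (r^2*ρ + φ*(x*(2*r*ρ+(x*s+y*t))+y*(y*s-x*t)) + φ^2*(r*(r*ρ+(x*s+y*t)))) := by
    linear_combination (φ*(-(s*r*ρ) + y*s*t + x*s^2 + φ*t^2*r))*hx + (φ^2*(r^3 - x^2*r))*hs
  nlinarith [hmain, mul_nonneg (sub_nonneg.2 hC1) hB, hr]

set_option maxHeartbeats 1000000 in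
/-- For `R₀ > 0` and `0 ≤ φₛ < 1`, the Matsumoto-type slope metric
`F(v) = ‖v‖²/(R₀(‖v‖ + φₛ v₁))` for `v ≠ 0`, `F(0) = 0`, is a convex function on ℝ²
if and only if `φₛ ≤ 1/2`. -/
theorem slopeMetric_convexOn_iff (R₀ φₛ : ℝ) (hR₀ : 0 < R₀)
    (hφ₀ : 0 ≤ φₛ) (hφ₁ : φₛ < 1)
    (F : EuclideanSpace ℝ (Fin 2) → ℝ) (hF0 : F 0 = 0)
    (hF : ∀ v : EuclideanSpace ℝ (Fin 2), v ≠ 0 →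
      F v = ‖v‖ ^ 2 / (R₀ * (‖v‖ + φₛ * v 0))) :
    ConvexOn ℝ Set.univ F ↔ φₛ ≤ 1 / 2 := by
  have hsq : ∀ v : EuclideanSpace ℝ (Fin 2), ‖v‖^2 = (v 0)^2 + (v 1)^2 := by
    intro v
    rw [EuclideanSpace.norm_eq, Real.sq_sqrt (by positivity)]
    simp [Fin.sum_univ_two, sq_abs]
  have habs : ∀ v : EuclideanSpace ℝ (Fin 2), |v 0| ≤ ‖v‖ := by
    intro v
    have h1 : (v 0)^2 ≤ ‖v‖^2 := by rw [hsq]; nlinarith [sq_nonneg (v 1)]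
    have h2 := Real.sqrt_le_sqrt h1
    rwa [Real.sqrt_sq_eq_abs, Real.sqrt_sq (norm_nonneg v)] at h2
  have hden : ∀ v : EuclideanSpace ℝ (Fin 2), v ≠ 0 → 0 < ‖v‖ + φₛ * v 0 := by
    intro v hv
    have h2 : -‖v‖ ≤ v 0 := by linarith [neg_abs_le (v 0), habs v]
    have h3 : 0 < ‖v‖ := norm_pos_iff.mpr hv
    nlinarith [mul_le_mul_of_nonneg_left h2 hφ₀, mul_pos (by linarith : (0:ℝ) < 1 - φₛ) h3]
  have hFnn : ∀ v, 0 ≤ F v := by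
    intro v
    by_cases hv : v = 0
    · rw [hv, hF0]
    · rw [hF v hv]
      exact div_nonneg (by positivity) (mul_pos hR₀ (hden v hv)).le
  constructor
  · -- convex → φₛ ≤ 1/2
    intro hconv
    by_contra hgt
    push_neg at hgt
    have h1φ : 0 < 1 - φₛ := by linarith
    set s₀ : ℝ := (1 + φₛ/(1-φₛ))/2 with hs₀def
    have hm1 : 1 < φₛ/(1-φₛ) := by rw [lt_div_iff₀ h1φ]; linarith
    have hs1 : 1 < s₀ := by rw [hs₀def]; linarith
    have hs2 : (1-φₛ)*s₀ < φₛ := by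
      have h : s₀ < φₛ/(1-φₛ) := by rw [hs₀def]; linarith
      calc (1-φₛ)*s₀ < (1-φₛ)*(φₛ/(1-φₛ)) := mul_lt_mul_of_pos_left h h1φ
        _ = φₛ := by field_simp
    set ε := Real.sqrt (s₀^2 - 1) with hεdef
    have hε2 : ε^2 = s₀^2 - 1 := Real.sq_sqrt (by nlinarith)
    set u : EuclideanSpace ℝ (Fin 2) := (WithLp.equiv 2 (Fin 2 → ℝ)).symm ![(-1:ℝ), ε] with hu
    set w : EuclideanSpace ℝ (Fin 2) := (WithLp.equiv 2 (Fin 2 → ℝ)).symm ![(-1:ℝ), -ε] with hw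
    have hu0 : u 0 = -1 := by rw [hu]; simp
    have hu1 : u 1 = ε := by rw [hu]; simp
    have hw0 : w 0 = -1 := by rw [hw]; simp
    have hw1 : w 1 = -ε := by rw [hw]; simp
    have hs0pos : 0 < s₀ := by linarith
    have hnu : ‖u‖ = s₀ := by
      have h2 : ‖u‖^2 = s₀^2 := by rw [hsq, hu0, hu1]; nlinarith [hε2]
      rw [← Real.sqrt_sq (norm_nonneg u), h2, Real.sqrt_sq hs0pos.le]
    have hnw : ‖w‖ = s₀ := by
      have h2 : ‖w‖^2 = s₀^2 := by rw [hsq, hw0, hw1]; nlinarith [hε2]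
      rw [← Real.sqrt_sq (norm_nonneg w), h2, Real.sqrt_sq hs0pos.le]
    have hune : u ≠ 0 := by
      intro h; rw [h] at hu0; simp at hu0
    have hwne : w ≠ 0 := by
      intro h; rw [h] at hw0; simp at hw0
    have key := hconv.2 (Set.mem_univ u) (Set.mem_univ w)
      (by norm_num : (0:ℝ) ≤ 1/2) (by norm_num : (0:ℝ) ≤ 1/2) (by norm_num : (1/2:ℝ) + 1/2 = 1)
    set m := (1/2:ℝ) • u + (1/2:ℝ) • w with hmdef
    have hm0 : m 0 = -1 := by rw [hmdef]; simp [hu0, hw0]; norm_num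
    have hm1' : m 1 = 0 := by rw [hmdef]; simp [hu1, hw1]
    have hmne : m ≠ 0 := by
      intro h; rw [h] at hm0; simp at hm0
    have hnm : ‖m‖ = 1 := by
      have h2 : ‖m‖^2 = 1 := by rw [hsq, hm0, hm1']; norm_num
      rw [← Real.sqrt_sq (norm_nonneg m), h2, Real.sqrt_one]
    rw [hF m hmne, hF u hune, hF w hwne, hnm, hnu, hnw, hm0, hu0, hw0] at key
    simp only [smul_eq_mul] at key
    have key2 : (1:ℝ)^2/(R₀*(1+φₛ*(-1))) ≤ s₀^2/(R₀*(s₀+φₛ*(-1))) := by linarith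
    have e1 : R₀*(1+φₛ*(-1)) = R₀*(1-φₛ) := by ring
    have e2 : R₀*(s₀+φₛ*(-1)) = R₀*(s₀-φₛ) := by ring
    rw [e1, e2] at key2
    have hd1 : 0 < R₀*(1-φₛ) := mul_pos hR₀ h1φ
    have hd2 : 0 < R₀*(s₀-φₛ) := mul_pos hR₀ (by linarith)
    have key3 := (div_le_div_iff₀ hd1 hd2).mp key2
    nlinarith [mul_pos hR₀ (mul_pos (by linarith : (0:ℝ) < s₀ - 1)
      (by linarith : (0:ℝ) < φₛ - (1-φₛ)*s₀))]
  · -- φₛ ≤ 1/2 → convex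
    intro hφ
    refine ⟨convex_univ, ?_⟩
    intro u _ w _ ta tb hta htb hab
    simp only [smul_eq_mul]
    by_cases hm : ta • u + tb • w = 0
    · rw [hm, hF0]
      have h1 := mul_nonneg hta (hFnn u)
      have h2 := mul_nonneg htb (hFnn w)
      linarith
    · set m := ta • u + tb • w with hmdef
      have hm0 : m 0 = ta * u 0 + tb * w 0 := by rw [hmdef]; simp
      have hm1 : m 1 = ta * u 1 + tb * w 1 := by rw [hmdef]; simp
      have hr : 0 < ‖m‖ := norm_pos_iff.mpr hm
      have hxy : (m 0)^2 + (m 1)^2 = ‖m‖^2 := (hsq m).symm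
      have hrx : 0 < ‖m‖ + φₛ * m 0 := hden m hm
      set r := ‖m‖ with hrdef
      set x := m 0 with hxdef
      set y := m 1 with hydef
      set a' := x*r + φₛ*(2*x^2 - r^2) with ha'
      set b' := y*(r + 2*φₛ*x) with hb'
      set D := R₀*(r + φₛ*x)^2 with hD
      have hDpos : 0 < D := by rw [hD]; exact mul_pos hR₀ (pow_pos hrx 2)
      have hsup : ∀ z : EuclideanSpace ℝ (Fin 2), (a' * z 0 + b' * z 1)/D ≤ F z := by
        intro z
        by_cases hz : z = 0
        · rw [hz, hF0]
          norm_num [show ((0:EuclideanSpace ℝ (Fin 2)) 0) = 0 from rfl,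
            show ((0:EuclideanSpace ℝ (Fin 2)) 1) = 0 from rfl]
        · have hρ : 0 < ‖z‖ := norm_pos_iff.mpr hz
          have hzden : 0 < ‖z‖ + φₛ * z 0 := hden z hz
          have hst : (z 0)^2 + (z 1)^2 = ‖z‖^2 := (hsq z).symm
          have K := slope_key φₛ r ‖z‖ x y (z 0) (z 1) hφ₀ hφ hr hρ hxy hst
          rw [hF z hz, div_le_div_iff₀ hDpos (mul_pos hR₀ hzden)]
          rw [ha', hb', hD]
          nlinarith [mul_le_mul_of_nonneg_left K hR₀.le]
      have hFm : F m = (a' * x + b' * y)/D := by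
        rw [hF m hm, ha', hb', hD]
        rw [div_eq_div_iff (mul_pos hR₀ hrx).ne' (mul_pos hR₀ (pow_pos hrx 2)).ne']
        linear_combination (-(R₀*(r+φₛ*x)*(r+2*φₛ*x)))*hxy
      calc F m = (a' * x + b' * y)/D := hFm
        _ = ta * ((a' * u 0 + b' * u 1)/D) + tb * ((a' * w 0 + b' * w 1)/D) := by
            rw [hm0, hm1]; field_simp; ring
        _ ≤ ta * F u + tb * F w := by
            have h1 := mul_le_mul_of_nonneg_left (hsup u) hta
            have h2 := mul_le_mul_of_nonneg_left (hsup w) htb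
            linarith
end

section
/- Let R₀ > 0 and 0 ≤ φₛ < 1/2, and define F : ℝ² ∖ {0} → ℝ by F(v) = ‖v‖²/(R₀(‖v‖ + φₛ·v₁)). Then for every v ≠ 0, the fundamental form of F at v, i.e., the symmetric bilinear form g_v(u,w) = (1/2)·D²(F²)(v)(u,w) given by one half of the second Fréchet derivative of F² at v, is positive definite: g_v(u,u) > 0 for every u ≠ 0. -/
/-!
Write the slope metric as `F(x) = ‖x‖² / (R₀(‖x‖ + ⟪w, x⟫))` with `w = φₛ e₀` and restrict it to
the line `t ↦ v + t • u`: `k(t) = F(v + t • u)`, `r(t) = ‖v + t • u‖`. Differentiating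
`r² = ‖v + t • u‖²` (a quadratic in `t`) and `k · R₀(r + ⟪w, v + t • u⟫) = r²` twice at `t = 0`
determines `k(0)`, `k'(0)`, `k''(0)`. With `s = ‖v‖`, `P = ⟪w, v⟫`, `Q = ⟪w, u⟫`, `B = ⟪v, u⟫`,
`C = ‖u‖²`, clearing denominators turns `R₀²(s + P)⁴ (k²)''(0)` into the sum of squares
`2((s + 2P)B - s²Q)² + 4(s²Q - PB)² + 2(s + P)(s + 2P)(s²C - B²)`,
which is positive for `u ≠ 0` by Cauchy–Schwarz as soon as `s + 2P > 0`; and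
`s + 2P ≥ (1 - 2φₛ)s > 0`.
-/

open Filter Topology
open scoped InnerProductSpace

section Calculus

variable {𝕜 : Type*} [NontriviallyNormedField 𝕜]

section Line

variable {E F : Type*} [NormedAddCommGroup E] [NormedSpace 𝕜 E] [NormedAddCommGroup F]
  [NormedSpace 𝕜 F]

theorem hasDerivAt_add_smul (v u : E) (t : 𝕜) : HasDerivAt (fun t : 𝕜 => v + t • u) u t := by
  simpa using ((hasDerivAt_id t).smul_const u).const_add v

theorem ContDiffAt.comp_add_smul {n : WithTop ℕ∞} {f : E → F} {v : E}
    (hf : ContDiffAt 𝕜 n f v) (u : E) : ContDiffAt 𝕜 n (fun t : 𝕜 => f (v + t • u)) 0 := by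
  have hline : ContDiff 𝕜 n (fun t : 𝕜 => v + t • u) := by fun_prop
  have hf₀ : ContDiffAt 𝕜 n f (v + (0 : 𝕜) • u) := by rwa [zero_smul, add_zero]
  exact hf₀.comp 0 hline.contDiffAt

theorem ContDiffAt.iteratedDeriv_two_comp_add_smul {f : E → F} {v : E}
    (hf : ContDiffAt 𝕜 2 f v) (u : E) :
    iteratedDeriv 2 (fun t : 𝕜 => f (v + t • u)) 0 = iteratedFDeriv 𝕜 2 f v ![u, u] := by
  have hline : ∀ t : 𝕜, HasDerivAt (fun t : 𝕜 => v + t • u) u t := hasDerivAt_add_smul v u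
  have hnear : ∀ᶠ t in 𝓝 (0 : 𝕜), ContDiffAt 𝕜 2 f (v + t • u) := by
    have := (hline 0).continuousAt.eventually (p := fun y => ContDiffAt 𝕜 2 f y)
    simp only [zero_smul, add_zero] at this
    exact this (hf.eventually (by simp))
  have hderiv : deriv (fun t : 𝕜 => f (v + t • u)) =ᶠ[𝓝 0]
      fun t => fderiv 𝕜 f (v + t • u) u := by
    filter_upwards [hnear] with t ht
    exact ((ht.differentiableAt (by simp)).hasFDerivAt.comp_hasDerivAt t (hline t)).deriv
  have hfderiv : HasFDerivAt (fderiv 𝕜 f) (fderiv 𝕜 (fderiv 𝕜 f) v) (v + (0 : 𝕜) • u) := by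
    rw [zero_smul, add_zero]
    have h : ContDiffAt 𝕜 1 (fderiv 𝕜 f) v := hf.fderiv_right (by norm_num)
    exact (h.differentiableAt (by norm_num)).hasFDerivAt
  have hcomp : HasDerivAt (fun t : 𝕜 => fderiv 𝕜 f (v + t • u))
      (fderiv 𝕜 (fderiv 𝕜 f) v u) 0 :=
    hfderiv.comp_hasDerivAt 0 (hline 0)
  have hsecond : HasDerivAt (fun t : 𝕜 => fderiv 𝕜 f (v + t • u) u)
      (fderiv 𝕜 (fderiv 𝕜 f) v u u) 0 := by
    simpa using hcomp.clm_apply (hasDerivAt_const 0 u)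
  rw [iteratedDeriv_succ, iteratedDeriv_one, hderiv.deriv_eq, iteratedFDeriv_two_apply]
  exact hsecond.deriv

end Line

theorem iteratedDeriv_two_fun_mul {𝔸 : Type*} [NormedRing 𝔸] [NormedAlgebra 𝕜 𝔸]
    {f g : 𝕜 → 𝔸} {x : 𝕜} (hf : ContDiffAt 𝕜 2 f x) (hg : ContDiffAt 𝕜 2 g x) :
    iteratedDeriv 2 (fun t => f t * g t) x =
      f x * iteratedDeriv 2 g x + 2 * (deriv f x * deriv g x) + iteratedDeriv 2 f x * g x := by
  simp [iteratedDeriv_fun_mul hf hg, Finset.sum_range_succ, iteratedDeriv_one, mul_assoc]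

end Calculus

/-- With `s = ‖v‖`, `P = ⟪w, v⟫`, `Q = ⟪w, u⟫`, `B = ⟪v, u⟫`, `C = ‖u‖²`, this is
`R₀²(s + P)⁴` times the second derivative of `(matsumotoMetric R₀ w)²` at `v` in direction `u`. -/
def matsumotoNumerator (s P Q B C : ℝ) : ℝ :=
  2 * ((s + 2 * P) * B - s ^ 2 * Q) ^ 2 + 4 * (s ^ 2 * Q - P * B) ^ 2
    + 2 * (s + P) * (s + 2 * P) * (s ^ 2 * C - B ^ 2)

theorem matsumotoNumerator_pos {s P Q B C : ℝ} (hs : 0 < s) (hs2P : 0 < s + 2 * P)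
    (hCS : B ^ 2 ≤ s ^ 2 * C) (hC : 0 < C) : 0 < matsumotoNumerator s P Q B C := by
  have hsP : 0 < s + P := by linarith
  rw [matsumotoNumerator]
  rcases hCS.lt_or_eq with hlt | heq
  · have h := sub_pos.2 hlt
    have : 0 < 2 * (s + P) * (s + 2 * P) * (s ^ 2 * C - B ^ 2) := by positivity
    linarith [sq_nonneg ((s + 2 * P) * B - s ^ 2 * Q), sq_nonneg (s ^ 2 * Q - P * B)]
  · rw [heq, sub_self, mul_zero, add_zero]
    have hB : (s + P) * B ≠ 0 := by
      refine mul_ne_zero hsP.ne' fun hB => ?_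
      rw [hB] at heq
      nlinarith [mul_pos (pow_pos hs 2) hC]
    -- `(s + P) * B` is the sum of the two squared quantities, so they cannot both vanish.
    rcases ne_or_eq ((s + 2 * P) * B - s ^ 2 * Q) 0 with h | h
    · nlinarith [sq_pos_of_ne_zero h, sq_nonneg (s ^ 2 * Q - P * B)]
    · have h' : s ^ 2 * Q - P * B ≠ 0 := fun h' => hB (by linear_combination h + h')
      nlinarith [sq_pos_of_ne_zero h', sq_nonneg ((s + 2 * P) * B - s ^ 2 * Q)]

theorem matsumotoNumerator_eq_of_jets {R₀ s P Q B C r₁ r₂ k₀ k₁ k₂ : ℝ}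
    (hR₀ : R₀ ≠ 0) (hsP : s + P ≠ 0) (hr₁ : s * r₁ = B) (hr₂ : s * r₂ + r₁ ^ 2 = C)
    (hk₀ : k₀ * (R₀ * (s + P)) = s ^ 2)
    (hk₁ : k₁ * (R₀ * (s + P)) + k₀ * (R₀ * (r₁ + Q)) = 2 * B)
    (hk₂ : k₀ * (R₀ * r₂) + 2 * (k₁ * (R₀ * (r₁ + Q))) + k₂ * (R₀ * (s + P)) = 2 * C) :
    (k₀ * k₂ + 2 * (k₁ * k₁) + k₂ * k₀) * (R₀ ^ 2 * (s + P) ^ 4) =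
      matsumotoNumerator s P Q B C := by
  have hD : R₀ * (s + P) ≠ 0 := mul_ne_zero hR₀ hsP
  have e₀ : k₀ = s ^ 2 / (R₀ * (s + P)) := by rw [eq_div_iff hD, hk₀]
  have e₁ : k₁ = (2 * B - k₀ * (R₀ * (r₁ + Q))) / (R₀ * (s + P)) := by
    rw [eq_div_iff hD]; linear_combination hk₁
  have e₂ : k₂ = (2 * C - 2 * (k₁ * (R₀ * (r₁ + Q))) - k₀ * (R₀ * r₂)) / (R₀ * (s + P)) := by
    rw [eq_div_iff hD]; linear_combination hk₂
  rw [e₂, e₁, e₀, matsumotoNumerator, ← hr₁, ← hr₂]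
  field_simp
  ring

section Matsumoto

variable {E : Type*} [NormedAddCommGroup E] [InnerProductSpace ℝ E]

theorem deriv_norm_add_smul_sq (v u : E) :
    deriv (fun t : ℝ => ‖v + t • u‖ ^ 2) = fun t => 2 * ⟪v + t • u, u⟫_ℝ :=
  funext fun t => (hasDerivAt_add_smul v u t).norm_sq.deriv

theorem iteratedDeriv_two_norm_add_smul_sq (v u : E) (t : ℝ) :
    iteratedDeriv 2 (fun t : ℝ => ‖v + t • u‖ ^ 2) t = 2 * ‖u‖ ^ 2 := by
  rw [iteratedDeriv_succ, iteratedDeriv_one, deriv_norm_add_smul_sq]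
  have := ((hasDerivAt_add_smul v u t).inner ℝ (hasDerivAt_const t u)).const_mul 2
  simpa [real_inner_self_eq_norm_sq] using this.deriv

theorem deriv_inner_add_smul (w v u : E) :
    deriv (fun t : ℝ => ⟪w, v + t • u⟫_ℝ) = fun _ => ⟪w, u⟫_ℝ :=
  funext fun t => by simpa using ((hasDerivAt_const t w).inner ℝ (hasDerivAt_add_smul v u t)).deriv

theorem iteratedDeriv_two_inner_add_smul (w v u : E) (t : ℝ) :
    iteratedDeriv 2 (fun t : ℝ => ⟪w, v + t • u⟫_ℝ) t = 0 := by
  rw [iteratedDeriv_succ, iteratedDeriv_one, deriv_inner_add_smul, deriv_const]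

theorem contDiffAt_norm_add_smul {v : E} (hv : v ≠ 0) (u : E) :
    ContDiffAt ℝ 2 (fun t : ℝ => ‖v + t • u‖) 0 :=
  (contDiffAt_norm ℝ hv).comp_add_smul u

theorem norm_mul_deriv_norm_add_smul {v : E} (hv : v ≠ 0) (u : E) :
    ‖v‖ * deriv (fun t : ℝ => ‖v + t • u‖) 0 = ⟪v, u⟫_ℝ := by
  have hr := (contDiffAt_norm_add_smul hv u).differentiableAt (by norm_num)
  have h := congrFun (deriv_norm_add_smul_sq v u) 0
  simp only [pow_two, deriv_fun_mul hr hr, zero_smul, add_zero] at h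
  linarith

theorem norm_mul_iteratedDeriv_two_norm_add_smul {v : E} (hv : v ≠ 0) (u : E) :
    ‖v‖ * iteratedDeriv 2 (fun t : ℝ => ‖v + t • u‖) 0
      + deriv (fun t : ℝ => ‖v + t • u‖) 0 ^ 2 = ‖u‖ ^ 2 := by
  have hr := contDiffAt_norm_add_smul hv u
  have h := iteratedDeriv_two_norm_add_smul_sq v u 0
  simp only [pow_two, iteratedDeriv_two_fun_mul hr hr, zero_smul, add_zero] at h
  linarith

noncomputable def matsumotoMetric (R₀ : ℝ) (w x : E) : ℝ := ‖x‖ ^ 2 / (R₀ * (‖x‖ + ⟪w, x⟫_ℝ))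

theorem contDiffAt_matsumotoMetric {R₀ : ℝ} (hR₀ : R₀ ≠ 0) {w v : E} (hv : v ≠ 0)
    (hvw : ‖v‖ + ⟪w, v⟫_ℝ ≠ 0) : ContDiffAt ℝ 2 (matsumotoMetric R₀ w) v := by
  have hnorm : ContDiffAt ℝ 2 (fun x : E => ‖x‖) v := contDiffAt_norm ℝ hv
  have hinner : ContDiffAt ℝ 2 (fun x : E => ⟪w, x⟫_ℝ) v :=
    contDiffAt_const.inner ℝ contDiffAt_id
  exact (hnorm.pow 2).div (contDiffAt_const.mul (hnorm.add hinner)) (mul_ne_zero hR₀ hvw)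

/-- The identity `k · D = ‖v + t • u‖²` with `D(t) = R₀(r(t) + ⟪w, v + t • u⟫)`, differentiated
at `t = 0`. -/
theorem matsumotoMetric_add_smul_jets {R₀ : ℝ} (hR₀ : R₀ ≠ 0) {w v : E} (hv : v ≠ 0)
    (hvw : ‖v‖ + ⟪w, v⟫_ℝ ≠ 0) (u : E) :
    let k := fun t : ℝ => matsumotoMetric R₀ w (v + t • u)
    let r := fun t : ℝ => ‖v + t • u‖
    let D₀ := R₀ * (‖v‖ + ⟪w, v⟫_ℝ)
    let D₁ := R₀ * (deriv r 0 + ⟪w, u⟫_ℝ)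
    let D₂ := R₀ * iteratedDeriv 2 r 0
    k 0 * D₀ = ‖v‖ ^ 2 ∧ deriv k 0 * D₀ + k 0 * D₁ = 2 * ⟪v, u⟫_ℝ ∧
      k 0 * D₂ + 2 * (deriv k 0 * D₁) + iteratedDeriv 2 k 0 * D₀ = 2 * ‖u‖ ^ 2 := by
  intro k r D₀ D₁ D₂
  set D := fun t : ℝ => R₀ * (r t + ⟪w, v + t • u⟫_ℝ)
  have hr : ContDiffAt ℝ 2 r 0 := contDiffAt_norm_add_smul hv u
  have hβ : ContDiffAt ℝ 2 (fun t : ℝ => ⟪w, v + t • u⟫_ℝ) 0 :=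
    (contDiffAt_const.inner ℝ contDiffAt_id).comp_add_smul u
  have hD : ContDiffAt ℝ 2 D 0 := contDiffAt_const.mul (hr.add hβ)
  have hk : ContDiffAt ℝ 2 k 0 := (contDiffAt_matsumotoMetric hR₀ hv hvw).comp_add_smul u
  have hD₀ : D 0 = D₀ := by simp [D, r, D₀]
  have hD₁ : deriv D 0 = D₁ := by
    rw [deriv_const_mul _ ((hr.add hβ).differentiableAt (by norm_num)),
      deriv_fun_add (hr.differentiableAt (by norm_num)) (hβ.differentiableAt (by norm_num)),
      deriv_inner_add_smul]
  have hD₂ : iteratedDeriv 2 D 0 = D₂ := by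
    rw [iteratedDeriv_const_mul_field, iteratedDeriv_fun_add hr hβ,
      iteratedDeriv_two_inner_add_smul, add_zero]
  have hkD : (fun t => k t * D t) =ᶠ[𝓝 0] fun t => ‖v + t • u‖ ^ 2 := by
    have hD_ne : ∀ᶠ t in 𝓝 (0 : ℝ), D t ≠ 0 :=
      hD.continuousAt.eventually_ne (by rw [hD₀]; exact mul_ne_zero hR₀ hvw)
    filter_upwards [hD_ne] with t ht
    exact div_mul_cancel₀ _ ht
  refine ⟨?_, ?_, ?_⟩
  · simpa [hD₀] using hkD.eq_of_nhds
  · rw [← hD₀, ← hD₁, ← deriv_fun_mul (hk.differentiableAt (by norm_num))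
      (hD.differentiableAt (by norm_num)), hkD.deriv_eq, deriv_norm_add_smul_sq]
    simp
  · rw [← hD₀, ← hD₁, ← hD₂, ← iteratedDeriv_two_fun_mul hk hD, hkD.iteratedDeriv_eq,
      iteratedDeriv_two_norm_add_smul_sq]

theorem matsumotoMetric_sq_iteratedFDeriv_two_pos {R₀ : ℝ} (hR₀ : R₀ ≠ 0) {w v : E}
    (hv : 0 < ‖v‖ + 2 * ⟪w, v⟫_ℝ) {u : E} (hu : u ≠ 0) :
    0 < iteratedFDeriv ℝ 2 (fun x => matsumotoMetric R₀ w x ^ 2) v ![u, u] := by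
  have hv₀ : v ≠ 0 := by rintro rfl; simp at hv
  have hvw : 0 < ‖v‖ + ⟪w, v⟫_ℝ := by linarith [norm_nonneg v]
  have hF := contDiffAt_matsumotoMetric hR₀ hv₀ hvw.ne'
  have hk := hF.comp_add_smul u
  obtain ⟨hk₀, hk₁, hk₂⟩ := matsumotoMetric_add_smul_jets hR₀ hv₀ hvw.ne' u
  have hCS : ⟪v, u⟫_ℝ ^ 2 ≤ ‖v‖ ^ 2 * ‖u‖ ^ 2 := by
    rw [← mul_pow, ← sq_abs]
    exact pow_le_pow_left₀ (abs_nonneg _) (abs_real_inner_le_norm v u) 2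
  have hN := matsumotoNumerator_pos (Q := ⟪w, u⟫_ℝ) (norm_pos_iff.2 hv₀) hv hCS (by positivity)
  rw [← matsumotoNumerator_eq_of_jets hR₀ hvw.ne'
    (norm_mul_deriv_norm_add_smul hv₀ u) (norm_mul_iteratedDeriv_two_norm_add_smul hv₀ u)
    hk₀ hk₁ hk₂] at hN
  rw [← (hF.pow 2).iteratedDeriv_two_comp_add_smul u]
  simp only [pow_two, iteratedDeriv_two_fun_mul hk hk]
  exact pos_of_mul_pos_left hN (by positivity)

theorem norm_add_two_inner_pos {w v : E} (hw : ‖w‖ < 1 / 2) (hv : v ≠ 0) :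
    0 < ‖v‖ + 2 * ⟪w, v⟫_ℝ := by
  have hv' := norm_pos_iff.2 hv
  have := abs_le.1 (abs_real_inner_le_norm w v)
  nlinarith

end Matsumoto

/-- For `R₀ > 0` and `0 ≤ φₛ < 1/2`, the fundamental form of the
Matsumoto-type slope metric `F(v) = ‖v‖²/(R₀(‖v‖ + φₛ v₁))`, i.e. one half of the
second Fréchet derivative of `F²` at any `v ≠ 0`, is positive definite. -/
theorem slopeMetric_fundamentalForm_posDef (R₀ φₛ : ℝ) (hR₀ : 0 < R₀)
    (hφ₀ : 0 ≤ φₛ) (hφ₁ : φₛ < 1 / 2)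
    (F : EuclideanSpace ℝ (Fin 2) → ℝ)
    (hF : ∀ v : EuclideanSpace ℝ (Fin 2), v ≠ 0 →
      F v = ‖v‖ ^ 2 / (R₀ * (‖v‖ + φₛ * v 0))) :
    ∀ v : EuclideanSpace ℝ (Fin 2), v ≠ 0 →
      ∀ u : EuclideanSpace ℝ (Fin 2), u ≠ 0 →
        0 < (1 / 2) * iteratedFDeriv ℝ 2 (fun x => F x ^ 2) v ![u, u] := by
  intro v hv u hu
  set w : EuclideanSpace ℝ (Fin 2) := EuclideanSpace.single 0 φₛ
  have hw : ‖w‖ < 1 / 2 := by simpa [w, abs_of_nonneg hφ₀] using hφ₁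
  have hFw : (fun x => F x ^ 2) =ᶠ[𝓝 v] fun x => matsumotoMetric R₀ w x ^ 2 := by
    filter_upwards [isOpen_ne.mem_nhds hv] with x hx
    simp [hF x hx, matsumotoMetric, w, EuclideanSpace.inner_single_left]
  rw [(hFw.iteratedFDeriv ℝ 2).eq_of_nhds]
  have := matsumotoMetric_sq_iteratedFDeriv_two_pos hR₀.ne' (norm_add_two_inner_pos hw hv) hu
  positivity
end

section
/- Let F : ℝ² → ℝ be continuous, nonnegative, convex, positively homogeneous of degree 1, with F(v) > 0 for v ≠ 0. Let A ⊆ ℝ² be nonempty and compact, and define ρ(p) = inf_{a ∈ A} F(p − a). Then for all s, t ≥ 0: {p : ρ(p) ≤ s + t} = {q + v : ρ(q) ≤ s, F(v) ≤ t}. In other words, the fire front evolution satisfies Huygens' principle: the region burnt by time s + t is exactly the union over all points q burnt by time s of the time-t F-balls centered at q. -/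
open scoped Pointwise

/-- **Huygens' principle for the fire front evolution.** Let
`F : ℝ² → ℝ` be continuous, nonnegative, convex, positively 1-homogeneous and
positive away from `0`, let `A ⊆ ℝ²` be nonempty and compact, and let
`ρ(p) = inf_{a ∈ A} F(p − a)`. Then for all `s, t ≥ 0`,
`{p : ρ(p) ≤ s + t} = {q : ρ(q) ≤ s} + {v : F v ≤ t}`: the region burnt by time
`s + t` is the union over all points `q` burnt by time `s` of the time-`t`
`F`-balls centered at `q`. -/
theorem fireFront_huygens_principle
    (F : EuclideanSpace ℝ (Fin 2) → ℝ)
    (hFcont : Continuous F)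
    (hnonneg : ∀ v, 0 ≤ F v)
    (hconv : ConvexOn ℝ Set.univ F)
    (hhomog : ∀ c : ℝ, 0 ≤ c → ∀ v, F (c • v) = c * F v)
    (hpos : ∀ v : EuclideanSpace ℝ (Fin 2), v ≠ 0 → 0 < F v)
    (A : Set (EuclideanSpace ℝ (Fin 2))) (hA : A.Nonempty) (hAcomp : IsCompact A)
    (ρ : EuclideanSpace ℝ (Fin 2) → ℝ)
    (hρ : ∀ p, ρ p = sInf ((fun a => F (p - a)) '' A)) :
    ∀ s t : ℝ, 0 ≤ s → 0 ≤ t →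
      {p : EuclideanSpace ℝ (Fin 2) | ρ p ≤ s + t} =
        {q : EuclideanSpace ℝ (Fin 2) | ρ q ≤ s} +
          {v : EuclideanSpace ℝ (Fin 2) | F v ≤ t} := by
  intro s t hs ht
  -- triangle inequality for F
  have htri : ∀ x y, F (x + y) ≤ F x + F y := by
    intro x y
    have h := hconv.2 (Set.mem_univ x) (Set.mem_univ y)
      (by norm_num : (0:ℝ) ≤ (1:ℝ)/2) (by norm_num : (0:ℝ) ≤ (1:ℝ)/2) (by norm_num)
    have h2 : F ((1/2 : ℝ) • (x + y)) ≤ 1/2 * F x + 1/2 * F y := by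
      rw [smul_add]; exact h
    have h3 := hhomog (1/2) (by norm_num) (x + y)
    rw [h3] at h2
    linarith
  have hF0 : F 0 = 0 := by
    have := hhomog 0 le_rfl 0
    simpa using this
  have hbdd : ∀ p, BddBelow ((fun a => F (p - a)) '' A) := by
    intro p
    exact ⟨0, by rintro y ⟨a, _, rfl⟩; exact hnonneg _⟩
  have hρle : ∀ p a, a ∈ A → ρ p ≤ F (p - a) := by
    intro p a ha
    rw [hρ]
    exact csInf_le (hbdd p) ⟨a, ha, rfl⟩
  have hsub : ∀ q v, ρ (q + v) ≤ ρ q + F v := by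
    intro q v
    have : ρ (q + v) - F v ≤ ρ q := by
      rw [hρ q]
      refine le_csInf (hA.image _) ?_
      rintro b ⟨a, ha, rfl⟩
      have h1 : ρ (q + v) ≤ F (q + v - a) := hρle _ a ha
      have h2 : F (q + v - a) ≤ F (q - a) + F v := by
        have : q + v - a = (q - a) + v := by abel
        rw [this]; exact htri _ _
      simp only
      linarith
    linarith
  ext p
  simp only [Set.mem_setOf_eq, Set.mem_add]
  constructor
  · intro hp
    obtain ⟨a, ha, hmin⟩ := hAcomp.exists_sInf_image_eq (f := fun a => F (p - a)) hA
      ((hFcont.comp (continuous_const.sub continuous_id)).continuousOn)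
    have hρp : ρ p = F (p - a) := by rw [hρ]; exact hmin
    set w := p - a with hw
    have hra : ρ a ≤ 0 := by
      have := hρle a a ha
      simpa [hF0] using this
    by_cases hcase : F w ≤ t
    · exact ⟨a, le_trans hra hs, w, hcase, by simp [hw]⟩
    · push_neg at hcase
      set r := F w with hr
      have hrpos : 0 < r := lt_of_le_of_lt ht hcase
      refine ⟨a + (1 - t / r) • w, ?_, (t / r) • w, ?_, ?_⟩
      · have hcoef : (0:ℝ) ≤ 1 - t / r := by
          have : t / r ≤ 1 := (div_le_one hrpos).mpr hcase.le
          linarith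
        have h1 : ρ (a + (1 - t / r) • w) ≤ F ((1 - t / r) • w) := by
          have := hρle (a + (1 - t / r) • w) a ha
          simpa using this
        rw [hhomog _ hcoef] at h1
        have hrst : r ≤ s + t := by rw [hρp] at hp; exact hp
        calc ρ (a + (1 - t / r) • w) ≤ (1 - t / r) * r := h1
          _ = r - t := by field_simp
          _ ≤ s := by linarith
      · rw [hhomog _ (div_nonneg ht hrpos.le)]
        rw [div_mul_cancel₀ _ hrpos.ne']
      · have : (1 - t / r) • w + (t / r) • w = w := by
          rw [← add_smul]; ring_nf; exact one_smul _ _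
        rw [add_assoc, this, hw]
        abel
  · rintro ⟨q, hq, v, hv, rfl⟩
    calc ρ (q + v) ≤ ρ q + F v := hsub q v
      _ ≤ s + t := add_le_add hq hv
end
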